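/- arXiv:2404.11123 — 2 statements merged into one kernel-verified Lean document; each statement's English description precedes it below -/
import Mathlib

section
/- Let h ∈ 𝔽_q[t] be a nonzero polynomial and N a non-negative integer. Then the Haar measure of the set of β in 𝕋 = {α ∈ 𝔽_q((t⁻¹)) : |α| < 1} such that ‖hβ‖ < q^{-N} equals q^{-N}. -/
open scoped Classical NNReal
open Polynomial MeasureTheory

noncomputable section

/-! ## The field `K∞ = 𝔽_q((1/t))`, modelled as formal Laurent series in `τ = t⁻¹` -/

/-- `t`, as an element of `K∞ = 𝔽_q((τ))` with `τ = t⁻¹`: the Laurent series `single (-1) 1`. -/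
def tK (Fq : Type) [Field Fq] : LaurentSeries Fq := HahnSeries.single (-1 : ℤ) 1

/-- The canonical embedding of the polynomial ring `𝔽_q[t]` into `K∞`. -/
def polyToK (Fq : Type) [Field Fq] (p : Polynomial Fq) : LaurentSeries Fq :=
  Polynomial.eval₂ HahnSeries.C (tK Fq) p

/-- The absolute value `|α| = q^{ord α}` on `K∞` (with `|0| = 0`). -/
def absK (Fq : Type) [Field Fq] [Fintype Fq] (α : LaurentSeries Fq) : ℝ≥0 :=
  if α = 0 then 0 else (Fintype.card Fq : ℝ≥0) ^ (-(HahnSeries.order α))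

/-- Sup-absolute value of a vector. -/
def vabs (Fq : Type) [Field Fq] [Fintype Fq] {R : ℕ} (β : Fin R → LaurentSeries Fq) : ℝ≥0 :=
  Finset.univ.sup fun k => absK Fq (β k)

/-- `‖α‖`: the distance from `α` to the ring of polynomials `𝔽_q[t]`;
this equals `|{α}|` where `{α}` is the fractional part of `α`. -/
def distP (Fq : Type) [Field Fq] [Fintype Fq] (α : LaurentSeries Fq) : ℝ≥0 :=
  sInf {r : ℝ≥0 | ∃ b : Polynomial Fq, r = absK Fq (α - polyToK Fq b)}

/-- The unit ball `𝕋 = {α ∈ K∞ : |α| < 1}`. -/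
def TT (Fq : Type) [Field Fq] [Fintype Fq] : Set (LaurentSeries Fq) := {α | absK Fq α < 1}

/-- The unit polydisc `𝕋^n`. -/
def TTn (Fq : Type) [Field Fq] [Fintype Fq] (n : ℕ) : Set (Fin n → LaurentSeries Fq) :=
  {v | ∀ i, absK Fq (v i) < 1}

/-- The standard additive character `ψ` of `K∞`:
`ψ(α) = exp(2πi·tr(a₋₁)/p)` where `a₋₁` is the coefficient of `t⁻¹` in `α`. -/
def psiK (Fq : Type) [Field Fq] [Fintype Fq] (p : ℕ) [CharP Fq p] (α : LaurentSeries Fq) : ℂ :=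
  letI : Algebra (ZMod p) Fq := (ZMod.castHom dvd_rfl Fq).toAlgebra
  Complex.exp (2 * Real.pi * Complex.I *
    ((Algebra.trace (ZMod p) Fq (α.coeff 1)).val : ℂ) / (p : ℂ))

/-- The polynomial with coefficient vector `v`; as `v` ranges over `Fin P → Fq` this
parametrises exactly the polynomials of norm `< q^P`, i.e. of degree `< P`. -/
def polyOf (Fq : Type) [Field Fq] {P : ℕ} (v : Fin P → Fq) : Polynomial Fq :=
  ∑ j : Fin P, Polynomial.C (v j) * Polynomial.X ^ (j : ℕ)

/-! ## Zariski-closed sets, irreducibility, dimension and degree -/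

/-- A Zariski-closed subset of affine `n`-space. -/
def ZarClosed (F : Type) [Field F] (n : ℕ) (S : Set (Fin n → F)) : Prop :=
  ∃ T : Set (MvPolynomial (Fin n) F), S = {x | ∀ f ∈ T, MvPolynomial.eval x f = 0}

/-- Irreducibility of a set with respect to the Zariski topology. -/
def IrredSet (F : Type) [Field F] (n : ℕ) (S : Set (Fin n → F)) : Prop :=
  S.Nonempty ∧ ∀ C₁ C₂ : Set (Fin n → F), ZarClosed F n C₁ → ZarClosed F n C₂ →
    S ⊆ C₁ ∪ C₂ → S ⊆ C₁ ∨ S ⊆ C₂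

/-- Dimension of a subset of affine space: the length of the longest chain of
irreducible Zariski-closed subsets contained in it. -/
def zdim (F : Type) [Field F] (n : ℕ) (S : Set (Fin n → F)) : ℕ :=
  sSup {m : ℕ | ∃ c : Fin (m + 1) → Set (Fin n → F),
    (∀ i, ZarClosed F n (c i) ∧ IrredSet F n (c i) ∧ c i ⊆ S) ∧ StrictMono c}

/-- Degree of an (irreducible) affine variety `S`: the largest (finite) number of points in
which an affine-linear subspace of complementary dimension can meet `S`. -/
def zdeg (F : Type) [Field F] (n : ℕ) (S : Set (Fin n → F)) : ℕ :=
  sSup {m : ℕ | ∃ L : AffineSubspace F (Fin n → F),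
    Module.finrank F L.direction = n - zdim F n S ∧
    (S ∩ (L : Set (Fin n → F))).Finite ∧ (S ∩ (L : Set (Fin n → F))).ncard = m}

/-! ## Smooth complete intersections and counting functions -/

/-- `f₁, …, f_R` are forms of degree `d` cutting out a smooth complete intersection
of codimension `R` in `ℙ^{n-1}`: they are homogeneous of degree `d`, the affine cone has
dimension `n - R`, and the Jacobian matrix has full rank `R` at every nonzero point of the
cone over the algebraic closure. -/
def SmoothCI (Fq : Type) [Field Fq] {n R : ℕ} (d : ℕ)
    (f : Fin R → MvPolynomial (Fin n) Fq) : Prop :=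
  (∀ k, (f k).IsHomogeneous d) ∧
  zdim (AlgebraicClosure Fq) n
      {x : Fin n → AlgebraicClosure Fq | ∀ k, MvPolynomial.aeval x (f k) = 0} = n - R ∧
  ∀ x : Fin n → AlgebraicClosure Fq, x ≠ 0 → (∀ k, MvPolynomial.aeval x (f k) = 0) →
    Matrix.rank (Matrix.of fun (k : Fin R) (i : Fin n) =>
      MvPolynomial.aeval x (MvPolynomial.pderiv i (f k))) = R

/-- The number of `z ∈ 𝔽_q[t]^n` with `|z| < q^D`, satisfying the side condition `extra`,
and with `f_k(z) ≡ 0 (mod g)` for all `k`. -/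
def NsolP (Fq : Type) [Field Fq] {n R : ℕ} (f : Fin R → MvPolynomial (Fin n) Fq)
    (g : Polynomial Fq) (D : ℕ) (extra : (Fin n → Polynomial Fq) → Prop) : ℕ :=
  Nat.card {z : Fin n → Polynomial Fq //
    (∀ i, (z i).degree < (D : WithBot ℕ)) ∧ extra z ∧
    ∀ k, g ∣ MvPolynomial.aeval z (f k)}

/-! ## Exponential sums -/

/-- The exponential sum `S(α; P) = Σ_{|x| < q^P} ψ(α · f(mx + b))`. -/
def Ssum (Fq : Type) [Field Fq] [Fintype Fq] (p : ℕ) [CharP Fq p] {n R : ℕ}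
    (f : Fin R → MvPolynomial (Fin n) Fq) (m : Polynomial Fq) (b : Fin n → Polynomial Fq)
    (α : Fin R → LaurentSeries Fq) (P : ℕ) : ℂ :=
  ∑ x : Fin n → Fin P → Fq,
    psiK Fq p (∑ k, α k *
      polyToK Fq (MvPolynomial.aeval (fun i => m * polyOf Fq (x i) + b i) (f k)))

/-- The complete exponential sum `S_g(a) = |g|^{-n} Σ_{|y| < |g|} ψ(a · f(my + b) / g)`. -/
def SgSum (Fq : Type) [Field Fq] [Fintype Fq] (p : ℕ) [CharP Fq p] {n R : ℕ}
    (f : Fin R → MvPolynomial (Fin n) Fq) (m : Polynomial Fq) (b : Fin n → Polynomial Fq)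
    (g : Polynomial Fq) (a : Fin R → Polynomial Fq) : ℂ :=
  ((Fintype.card Fq : ℂ) ^ (g.natDegree * n))⁻¹ *
    ∑ y : Fin n → Fin g.natDegree → Fq,
      psiK Fq p (∑ k, polyToK Fq (a k) *
        polyToK Fq (MvPolynomial.aeval (fun i => m * polyOf Fq (y i) + b i) (f k)) /
        polyToK Fq g)

/-! ## Forms given by symmetric coefficients, and their multilinear forms -/

/-- Symmetry of a system of degree-`d` coefficients. -/
def SymCoeffs (Fq : Type) [Field Fq] (d n : ℕ) (c : (Fin d → Fin n) → Fq) : Prop :=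
  ∀ (σ : Equiv.Perm (Fin d)) (s : Fin d → Fin n), c (s ∘ σ) = c s

/-- Evaluation of the degree-`d` form with coefficients `c`:
`f(x) = Σ_{i₁,…,i_d} c_{i₁…i_d} x_{i₁} ⋯ x_{i_d}`. -/
def formEval (Fq : Type) [Field Fq] {A : Type} [CommRing A] (d n : ℕ) (φ : Fq →+* A)
    (c : (Fin d → Fin n) → Fq) (x : Fin n → A) : A :=
  ∑ s : Fin d → Fin n, φ (c s) * ∏ j, x (s j)

/-- The `i`-th multilinear form of the form with symmetric coefficients `c`:
`Ψ_i(x^{(1)},…,x^{(d-1)}) = d! Σ c_{i₁…i_{d-1} i} x^{(1)}_{i₁} ⋯ x^{(d-1)}_{i_{d-1}}`. -/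
def psiML (Fq : Type) [Field Fq] {A : Type} [CommRing A] (d n : ℕ) (φ : Fq →+* A)
    (c : (Fin d → Fin n) → Fq) (i : Fin n) (u : Fin (d - 1) → Fin n → A) : A :=
  (Nat.factorial d : A) * ∑ idx : Fin (d - 1) → Fin n,
    φ (c fun j => if h : (j : ℕ) < d - 1 then idx ⟨(j : ℕ), h⟩ else i) * ∏ j, u j (idx j)

/-- The exponential sum `S(α; P)` for the system of forms with coefficients `c`. -/
def SsumC (Fq : Type) [Field Fq] [Fintype Fq] (p : ℕ) [CharP Fq p] (d n R : ℕ)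
    (c : Fin R → (Fin d → Fin n) → Fq) (m : Polynomial Fq) (b : Fin n → Polynomial Fq)
    (α : Fin R → LaurentSeries Fq) (P : ℕ) : ℂ :=
  ∑ x : Fin n → Fin P → Fq,
    psiK Fq p (∑ k, α k * polyToK Fq
      (formEval Fq d n Polynomial.C (c k) fun i => m * polyOf Fq (x i) + b i))

/-! ## The field `F = algebraic closure of 𝔽_q(t)` and the Birch singular loci -/

/-- An algebraically closed field containing `𝔽_q[t]`. -/
abbrev FF (Fq : Type) [Field Fq] : Type := AlgebraicClosure (FractionRing (Polynomial Fq))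

/-- The embedding `𝔽_q[t] → F`. -/
def embPoly (Fq : Type) [Field Fq] : Polynomial Fq →+* FF Fq :=
  (algebraMap (FractionRing (Polynomial Fq)) (FF Fq)).comp
    (algebraMap (Polynomial Fq) (FractionRing (Polynomial Fq)))

/-- The embedding `𝔽_q → F`. -/
def embFq (Fq : Type) [Field Fq] : Fq →+* FF Fq := (embPoly Fq).comp Polynomial.C

/-- `σ_f`: the maximum over nonzero `h ∈ 𝔽_q[t]^R` of the dimension of the locus
`V_{h·f} = {x : h₁∇f₁(x) + ⋯ + h_R ∇f_R(x) = 0}`. -/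
def sigmaF (Fq : Type) [Field Fq] {n R : ℕ} (f : Fin R → MvPolynomial (Fin n) Fq) : ℕ :=
  sSup {s : ℕ | ∃ h : Fin R → Polynomial Fq, h ≠ 0 ∧
    s = zdim (FF Fq) n {x : Fin n → FF Fq | ∀ i : Fin n,
      ∑ k, embPoly Fq (h k) *
        MvPolynomial.eval₂ (embFq Fq) x (MvPolynomial.pderiv i (f k)) = 0}}

/-!
If `‖hβ‖ < q^{-N}` then `|hβ - b| < q^{-N}` for some polynomial `b`, and for `β ∈ 𝕋` the
ultrametric inequality forces `deg b < deg h`. Hence `{β ∈ 𝕋 : ‖hβ‖ < q^{-N}}` is the disjoint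
union of the `q^{deg h}` balls of radius `q^{-N - deg h}` around the points `b / h`.
A translation-invariant measure with `μ 𝕋 = 1` gives every ball of radius `q^{-m}` the measure
`q^{-m}`, because such a ball is the disjoint union of `q` translates of a ball of radius
`q^{-m-1}`.
-/

open HahnSeries

def ballK (Fq : Type) [Field Fq] [Fintype Fq] (c : LaurentSeries Fq) (k : ℤ) :
    Set (LaurentSeries Fq) :=
  {α | absK Fq (α - c) < (Fintype.card Fq : ℝ≥0) ^ k}

section
variable {Fq : Type} [Field Fq]

lemma polyToK_sub (a b : Fq[X]) : polyToK Fq (a - b) = polyToK Fq a - polyToK Fq b :=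
  map_sub (eval₂RingHom (C : Fq →+* LaurentSeries Fq) (tK Fq)) a b

lemma polyToK_monomial (n : ℕ) (a : Fq) :
    polyToK Fq (monomial n a) = single (-(n : ℤ)) a := by
  simp [polyToK, tK, single_pow, C_apply, single_mul_single]

lemma coeff_polyToK (p : Fq[X]) (k : ℤ) :
    (polyToK Fq p).coeff k = if k ≤ 0 then p.coeff (-k).toNat else 0 := by
  induction p using Polynomial.induction_on' with
  | add p p' hp hp' =>
    rw [show polyToK Fq (p + p') = polyToK Fq p + polyToK Fq p' from eval₂_add _ _,
      HahnSeries.coeff_add, hp, hp']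
    split_ifs <;> simp
  | monomial n a =>
    rw [polyToK_monomial, coeff_single, coeff_monomial]
    split_ifs <;> first | rfl | (exfalso; omega)

lemma polyToK_ne_zero {p : Fq[X]} (hp : p ≠ 0) : polyToK Fq p ≠ 0 :=
  ne_zero_of_coeff_ne_zero (g := -(p.natDegree : ℤ)) (by simpa [coeff_polyToK] using hp)

lemma polyOf_eq_degreeLTEquiv_symm {P : ℕ} (v : Fin P → Fq) :
    polyOf Fq v = ((degreeLTEquiv Fq P).symm v : Fq[X]) := by
  simp [polyOf, degreeLTEquiv, C_mul_X_pow_eq_monomial]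

lemma polyOf_injective {P : ℕ} : Function.Injective (polyOf Fq (P := P)) := fun v w hvw =>
  (degreeLTEquiv Fq P).symm.injective
    (Subtype.ext (by rwa [polyOf_eq_degreeLTEquiv_symm, polyOf_eq_degreeLTEquiv_symm] at hvw))

lemma exists_polyOf_iff {P : ℕ} {p : Fq[X] → Prop} :
    (∃ v : Fin P → Fq, p (polyOf Fq v)) ↔ ∃ b : Fq[X], b.degree < P ∧ p b := by
  constructor
  · rintro ⟨v, hv⟩
    rw [polyOf_eq_degreeLTEquiv_symm] at hv
    exact ⟨_, mem_degreeLT.mp (Subtype.prop _), hv⟩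
  · rintro ⟨b, hb, hpb⟩
    refine ⟨degreeLTEquiv Fq P ⟨b, mem_degreeLT.mpr hb⟩, ?_⟩
    rwa [polyOf_eq_degreeLTEquiv_symm, LinearEquiv.symm_apply_apply]

end

section
variable {Fq : Type} [Field Fq] [Fintype Fq]

local notation "q" => (Fintype.card Fq : ℝ≥0)

lemma one_lt_card_nnreal : (1 : ℝ≥0) < q := by
  exact_mod_cast Fintype.one_lt_card

lemma absK_lt_zpow_iff {α : LaurentSeries Fq} {k : ℤ} :
    absK Fq α < q ^ k ↔ ∀ i ≤ -k, α.coeff i = 0 := by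
  unfold absK
  split_ifs with hα
  · simp [hα, zpow_pos (zero_lt_one.trans (one_lt_card_nnreal (Fq := Fq))) k]
  · rw [zpow_lt_zpow_iff_right₀ one_lt_card_nnreal, neg_lt]
    constructor
    · intro hlt i hi
      by_contra hne
      exact (order_le_of_coeff_ne_zero hne).not_gt (by omega)
    · intro hc
      by_contra! hle
      exact coeff_order_eq_zero.not.mpr hα (hc _ hle)

lemma absK_add_lt {α β : LaurentSeries Fq} {k : ℤ} (hα : absK Fq α < q ^ k)
    (hβ : absK Fq β < q ^ k) : absK Fq (α + β) < q ^ k := by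
  rw [absK_lt_zpow_iff] at *
  intro i hi
  simp [hα i hi, hβ i hi]

lemma absK_sub_lt {α β : LaurentSeries Fq} {k : ℤ} (hα : absK Fq α < q ^ k)
    (hβ : absK Fq β < q ^ k) : absK Fq (α - β) < q ^ k := by
  rw [absK_lt_zpow_iff] at *
  intro i hi
  simp [hα i hi, hβ i hi]

lemma absK_mul (α β : LaurentSeries Fq) : absK Fq (α * β) = absK Fq α * absK Fq β := by
  by_cases hα : α = 0
  · simp [hα, absK]
  by_cases hβ : β = 0
  · simp [hβ, absK]
  simp only [absK, if_neg hα, if_neg hβ, if_neg (mul_ne_zero hα hβ), order_mul hα hβ, neg_add,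
    zpow_add₀ (one_lt_card_nnreal (Fq := Fq)).ne_bot]

lemma absK_polyToK {p : Fq[X]} (hp : p ≠ 0) : absK Fq (polyToK Fq p) = q ^ (p.natDegree : ℤ) := by
  have hlead : (polyToK Fq p).coeff (-(p.natDegree : ℤ)) ≠ 0 := by
    simpa [coeff_polyToK] using leadingCoeff_ne_zero.mpr hp
  have hne : polyToK Fq p ≠ 0 := polyToK_ne_zero hp
  have horder : (polyToK Fq p).order = -(p.natDegree : ℤ) := by
    refine le_antisymm (order_le_of_coeff_ne_zero hlead) ((le_order_iff_forall hne).2 ?_)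
    intro j hj
    rw [coeff_polyToK, if_pos (by omega), coeff_eq_zero_of_natDegree_lt (by omega)]
  rw [absK, if_neg hne, horder, neg_neg]

lemma absK_polyToK_lt_iff {p : Fq[X]} {e : ℕ} :
    absK Fq (polyToK Fq p) < q ^ (e : ℤ) ↔ p.degree < e := by
  rw [absK_lt_zpow_iff, degree_lt_iff_coeff_zero]
  constructor
  · intro h m hm
    simpa [coeff_polyToK] using h (-(m : ℤ)) (by omega)
  · intro h i hi
    rw [coeff_polyToK, if_pos (by omega)]
    exact h _ (by omega)

lemma absK_polyToK_mul_lt_iff {h : Fq[X]} (hh : h ≠ 0) (γ : LaurentSeries Fq) (k : ℤ) :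
    absK Fq (polyToK Fq h * γ) < q ^ (k + h.natDegree) ↔ absK Fq γ < q ^ k := by
  rw [absK_mul, absK_polyToK hh, zpow_add₀ (one_lt_card_nnreal (Fq := Fq)).ne_bot, mul_comm,
    mul_lt_mul_iff_left₀ (zpow_pos (zero_lt_one.trans one_lt_card_nnreal) _)]

lemma distP_lt_iff {α : LaurentSeries Fq} {r : ℝ≥0} :
    distP Fq α < r ↔ ∃ b : Fq[X], absK Fq (α - polyToK Fq b) < r := by
  have hne : {r : ℝ≥0 | ∃ b : Fq[X], r = absK Fq (α - polyToK Fq b)}.Nonempty := ⟨_, 0, rfl⟩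
  rw [distP, csInf_lt_iff (OrderBot.bddBelow _) hne]
  simp

lemma disjoint_ballK {c c' : LaurentSeries Fq} {k : ℤ} (hcc' : q ^ k ≤ absK Fq (c - c')) :
    Disjoint (ballK Fq c k) (ballK Fq c' k) :=
  Set.disjoint_left.2 fun β hβ hβ' =>
    hcc'.not_gt (by simpa only [sub_sub_sub_cancel_left] using absK_sub_lt hβ' hβ)

lemma ballK_zero_eq_iUnion (k : ℤ) :
    ballK Fq 0 k = ⋃ a : Fq, ballK Fq (single (1 - k) a) (k - 1) := by
  ext α
  simp only [ballK, Set.mem_iUnion, sub_zero, absK_lt_zpow_iff]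
  constructor
  · intro hα
    refine ⟨α.coeff (1 - k), fun i hi => ?_⟩
    rw [HahnSeries.coeff_sub, coeff_single]
    split_ifs with hik
    · rw [hik, sub_self]
    · rw [sub_zero]
      exact hα i (by omega)
  · rintro ⟨a, ha⟩ i hi
    simpa [coeff_single, show i ≠ 1 - k by omega] using ha i (by omega)

lemma le_absK_single_sub_single {a a' : Fq} (ha : a ≠ a') (k : ℤ) :
    q ^ (k - 1) ≤ absK Fq (single (1 - k) a - single (1 - k) a') := by
  rw [← not_lt, absK_lt_zpow_iff]
  intro hc
  simpa [sub_eq_zero, ha] using hc (1 - k) (by omega)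

lemma mem_ballK_div_iff {h : Fq[X]} (hh : h ≠ 0) (b : Fq[X]) (β : LaurentSeries Fq) (k : ℤ) :
    β ∈ ballK Fq (polyToK Fq b / polyToK Fq h) k ↔
      absK Fq (polyToK Fq h * β - polyToK Fq b) < q ^ (k + h.natDegree) := by
  rw [ballK, Set.mem_ofPred_eq, ← absK_polyToK_mul_lt_iff hh, mul_sub,
    mul_div_cancel₀ _ (polyToK_ne_zero hh)]

lemma setOf_mem_TT_distP_mul_lt_eq_iUnion {h : Fq[X]} (hh : h ≠ 0) (N : ℕ) :
    {β | β ∈ TT Fq ∧ distP Fq (polyToK Fq h * β) < q ^ (-(N : ℤ))} =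
      ⋃ v : Fin h.natDegree → Fq,
        ballK Fq (polyToK Fq (polyOf Fq v) / polyToK Fq h) (-(N + h.natDegree : ℕ)) := by
  have hrad : -((N + h.natDegree : ℕ) : ℤ) + h.natDegree = -N := by push_cast; ring
  have hNe : q ^ (-(N : ℤ)) ≤ q ^ (h.natDegree : ℤ) :=
    zpow_le_zpow_right₀ one_lt_card_nnreal.le (by omega)
  ext β
  simp only [Set.mem_ofPred_eq, Set.mem_iUnion, mem_ballK_div_iff hh, hrad, distP_lt_iff]
  refine Iff.trans ?_ (exists_polyOf_iff
    (p := fun b => absK Fq (polyToK Fq h * β - polyToK Fq b) < q ^ (-N : ℤ))).symm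
  rw [TT, Set.mem_ofPred_eq, ← zpow_zero q, ← absK_polyToK_mul_lt_iff hh β 0, zero_add]
  constructor
  · rintro ⟨hβ, b, hb⟩
    exact ⟨b, absK_polyToK_lt_iff.mp (by simpa using absK_sub_lt hβ (hb.trans_le hNe)), hb⟩
  · rintro ⟨b, hdeg, hb⟩
    exact ⟨by simpa using absK_add_lt (hb.trans_le hNe) (absK_polyToK_lt_iff.mpr hdeg), b, hb⟩

lemma zpow_neg_natDegree_le_absK_div_sub_div {h b b' : Fq[X]} (hh : h ≠ 0) (hb : b ≠ b') :
    q ^ (-(h.natDegree : ℤ)) ≤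
      absK Fq (polyToK Fq b / polyToK Fq h - polyToK Fq b' / polyToK Fq h) := by
  have hH := polyToK_ne_zero hh
  rw [← not_lt, ← absK_polyToK_mul_lt_iff hh, neg_add_cancel, zpow_zero, mul_sub,
    mul_div_cancel₀ _ hH, mul_div_cancel₀ _ hH, ← polyToK_sub, absK_polyToK (sub_ne_zero.mpr hb),
    not_lt]
  exact one_le_zpow₀ one_lt_card_nnreal.le (by positivity)

section Measure
variable [MeasurableSpace (LaurentSeries Fq)] {μ : Measure (LaurentSeries Fq)}

lemma measure_ballK_eq_measure_ballK_zero
    (hinv : ∀ (a : LaurentSeries Fq) (s : Set (LaurentSeries Fq)), μ ((a + ·) ⁻¹' s) = μ s)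
    (c : LaurentSeries Fq) (k : ℤ) : μ (ballK Fq c k) = μ (ballK Fq 0 k) := by
  have : ballK Fq c k = ((-c) + ·) ⁻¹' ballK Fq 0 k := by
    ext
    simp [ballK, neg_add_eq_sub]
  rw [this, hinv]

lemma measure_iUnion_ballK {ι : Type} [Fintype ι]
    (hinv : ∀ (a : LaurentSeries Fq) (s : Set (LaurentSeries Fq)), μ ((a + ·) ⁻¹' s) = μ s)
    (hball : ∀ (c : LaurentSeries Fq) (k : ℤ),
      MeasurableSet {α : LaurentSeries Fq | absK Fq (α - c) < (Fintype.card Fq : ℝ≥0) ^ k})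
    {c : ι → LaurentSeries Fq} {k : ℤ} (hc : Pairwise fun i j => q ^ k ≤ absK Fq (c i - c j)) :
    μ (⋃ i, ballK Fq (c i) k) = Fintype.card ι * μ (ballK Fq 0 k) := by
  rw [measure_iUnion (fun i j hij => disjoint_ballK (hc hij)) (fun i => hball _ _), tsum_fintype]
  simp [measure_ballK_eq_measure_ballK_zero hinv]

lemma measure_ballK
    (hinv : ∀ (a : LaurentSeries Fq) (s : Set (LaurentSeries Fq)), μ ((a + ·) ⁻¹' s) = μ s)
    (hball : ∀ (c : LaurentSeries Fq) (k : ℤ),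
      MeasurableSet {α : LaurentSeries Fq | absK Fq (α - c) < (Fintype.card Fq : ℝ≥0) ^ k})
    (hT : μ (TT Fq) = 1) (m : ℕ) (c : LaurentSeries Fq) :
    μ (ballK Fq c (-m)) = (Fintype.card Fq : ENNReal) ^ (-(m : ℤ)) := by
  have hq0 : (Fintype.card Fq : ENNReal) ≠ 0 := by simp
  have hqt : (Fintype.card Fq : ENNReal) ≠ ⊤ := ENNReal.natCast_ne_top _
  rw [measure_ballK_eq_measure_ballK_zero hinv]
  induction m with
  | zero => simpa [ballK, TT] using hT
  | succ m ih =>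
    have hsplit := congrArg μ (ballK_zero_eq_iUnion (Fq := Fq) (-m))
    rw [measure_iUnion_ballK hinv hball (fun a a' ha => le_absK_single_sub_single ha _), ih]
      at hsplit
    rw [show (-((m + 1 : ℕ) : ℤ)) = -m - 1 by push_cast; ring, ← ENNReal.mul_right_inj hq0 hqt,
      ← hsplit]
    nth_rw 2 [← zpow_one (Fintype.card Fq : ENNReal)]
    rw [← ENNReal.zpow_add hq0 hqt]
    ring_nf

end Measure

end

/-- Lemma 2.2. For any `N ≥ 0` and nonzero `h ∈ 𝔽_q[t]`, the Haar
measure (normalised so that `𝕋` has measure `1`) of `{β ∈ 𝕋 : ‖hβ‖ < q^{-N}}` is `q^{-N}`. -/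
theorem statement1 (Fq : Type) [Field Fq] [Fintype Fq]
    [MeasurableSpace (LaurentSeries Fq)] (μ : Measure (LaurentSeries Fq))
    (hinv : ∀ (a : LaurentSeries Fq) (s : Set (LaurentSeries Fq)), μ ((a + ·) ⁻¹' s) = μ s)
    (hball : ∀ (c : LaurentSeries Fq) (k : ℤ),
      MeasurableSet {α : LaurentSeries Fq | absK Fq (α - c) < (Fintype.card Fq : ℝ≥0) ^ k})
    (hT : μ (TT Fq) = 1)
    (h : Polynomial Fq) (hh : h ≠ 0) (N : ℕ) :
    μ {β : LaurentSeries Fq | β ∈ TT Fq ∧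
        distP Fq (polyToK Fq h * β) < (Fintype.card Fq : ℝ≥0) ^ (-(N : ℤ))}
      = (Fintype.card Fq : ENNReal) ^ (-(N : ℤ)) := by
  have hq0 : (Fintype.card Fq : ENNReal) ≠ 0 := by simp
  have hsep : Pairwise fun v w : Fin h.natDegree → Fq =>
      (Fintype.card Fq : ℝ≥0) ^ (-((N + h.natDegree : ℕ) : ℤ)) ≤
        absK Fq (polyToK Fq (polyOf Fq v) / polyToK Fq h -
          polyToK Fq (polyOf Fq w) / polyToK Fq h) := fun v w hvw =>
    (zpow_le_zpow_right₀ one_lt_card_nnreal.le (by omega)).trans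
      (zpow_neg_natDegree_le_absK_div_sub_div hh (polyOf_injective.ne hvw))
  rw [setOf_mem_TT_distP_mul_lt_eq_iUnion hh N, measure_iUnion_ballK hinv hball hsep,
    measure_ballK hinv hball hT, Fintype.card_fun, Fintype.card_fin, Nat.cast_pow,
    ← zpow_natCast, ← ENNReal.zpow_add hq0 (ENNReal.natCast_ne_top _)]
  congr 1
  push_cast
  ring
end
end

section
/- Let f_1,…,f_R be degree-d forms over 𝔽_q (char > d) cutting out a smooth complete intersection in ℙ^{n−1}. Let π be a monic irreducible polynomial in 𝔽_q[t], μ ≥ 1 an integer, and b ∈ 𝔽_q[t]^n with gcd(b, π) = 1 and f_i(b) ≡ 0 mod π^μ for all i. For e > μ, let N†(π^e) be the number of z ∈ 𝔽_q[t]^n with |z| < |π^e|, f(z) ≡ 0 mod π^e, and z ≡ b mod π^μ. Then N†(π^e) = |π|^{n−R} · N†(π^{e−1}) for all e ≥ 2 (with e − 1 ≥ μ). -/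
open scoped Classical NNReal
open Polynomial MeasureTheory

noncomputable section

/-!
Write a solution `z` modulo `π^e` with `z ≡ b (mod π^μ)` as `z = y + π^(e-1) w` with
`|y| < |π^(e-1)|` and `|w| < |π|`. Since `2(e-1) ≥ e`, Taylor expansion gives
`f(z) ≡ f(y) + π^(e-1) J_f(y) w (mod π^e)`, so `z` is a solution iff `y` is a solution modulo
`π^(e-1)` and `w` solves the linear system `f(y)/π^(e-1) + J_f(y) w ≡ 0 (mod π)`. As `y ≡ b` is
nonzero modulo `π` and `f(y) ≡ 0 (mod π)`, smoothness makes `J_f(y)` of rank `R` over the residue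
field `𝔽_q[t]/π`, so this affine system has exactly `|π|^(n-R)` solutions, whatever `y` is.
-/

open MvPolynomial (aeval pderiv)
open scoped Matrix

namespace MvPolynomial

variable {R A : Type*} [CommSemiring R] [CommRing A] [Algebra R A] {n : ℕ}

theorem exists_aeval_add_smul_eq (g : MvPolynomial (Fin n) R) (c : A) (y w : Fin n → A) :
    ∃ T, aeval (y + c • w) g =
      aeval y g + c * ∑ i, aeval y (pderiv i g) * w i + c ^ 2 * T := by
  induction g using MvPolynomial.induction_on with
  | C a => exact ⟨0, by simp⟩
  | add p q hp hq =>
    obtain ⟨S, hS⟩ := hp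
    obtain ⟨T, hT⟩ := hq
    refine ⟨S + T, ?_⟩
    simp only [map_add, hS, hT, add_mul, Finset.sum_add_distrib]
    ring
  | mul_X p j hp =>
    obtain ⟨T, hT⟩ := hp
    have hderiv : ∑ i, aeval y (pderiv i (p * X j)) * w i =
        (∑ i, aeval y (pderiv i p) * w i) * y j + aeval y p * w j := by
      simp only [Derivation.leibniz, smul_eq_mul, pderiv_X, map_add, map_mul, aeval_X, add_mul,
        Finset.sum_add_distrib, Finset.sum_mul]
      simp [Pi.single_apply, mul_comm, mul_left_comm, add_comm]
    refine ⟨T * y j + w j * ∑ i, aeval y (pderiv i p) * w i + c * (w j * T), ?_⟩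
    simp only [map_mul, aeval_X, hderiv, hT, Pi.add_apply, Pi.smul_apply, smul_eq_mul]
    ring

theorem dvd_aeval_add_smul_iff (g : MvPolynomial (Fin n) R) (c : A) (y w : Fin n → A) :
    c ∣ aeval (y + c • w) g ↔ c ∣ aeval y g := by
  obtain ⟨T, hT⟩ := exists_aeval_add_smul_eq g c y w
  rw [hT, add_assoc]
  exact dvd_add_left (dvd_add (dvd_mul_right _ _)
    (dvd_mul_of_dvd_left (dvd_pow_self c two_ne_zero) _))

/-- Here `g(y + c w) = c (u + ∇g(y) · w) + c² T`, and `π ∣ c` absorbs the last term. -/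
theorem mul_dvd_aeval_add_smul_iff [IsDomain A] {g : MvPolynomial (Fin n) R} {c π u : A}
    (hc : c ≠ 0) (hπc : π ∣ c) {y : Fin n → A} (hu : aeval y g = c * u) (w : Fin n → A) :
    c * π ∣ aeval (y + c • w) g ↔ π ∣ u + ∑ i, aeval y (pderiv i g) * w i := by
  obtain ⟨T, hT⟩ := exists_aeval_add_smul_eq g c y w
  rw [hT, hu, show c * u + c * ∑ i, aeval y (pderiv i g) * w i + c ^ 2 * T =
    c * (u + ∑ i, aeval y (pderiv i g) * w i + c * T) by ring, mul_dvd_mul_iff_left hc]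
  exact dvd_add_left (dvd_mul_of_dvd_left hπc T)

end MvPolynomial

namespace Polynomial

variable {K : Type*} [Field K]

theorem degree_add_mul_lt_iff {c y w : K[X]} (hc : c.Monic) (hy : y.degree < c.degree) (m : ℕ) :
    (y + c * w).degree < ((c.natDegree + m : ℕ) : WithBot ℕ) ↔ w.degree < m := by
  rcases eq_or_ne w 0 with rfl | hw
  · rw [mul_zero, add_zero, degree_zero]
    refine iff_of_true (hy.trans_le ?_) (WithBot.bot_lt_coe m)
    rw [degree_eq_natDegree hc.ne_zero]
    exact_mod_cast Nat.le_add_right _ _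
  · have hcw : (c * w).degree = ((c.natDegree + w.natDegree : ℕ) : WithBot ℕ) := by
      rw [degree_mul, degree_eq_natDegree hc.ne_zero, degree_eq_natDegree hw]; rfl
    have hlt : y.degree < (c * w).degree := by
      rw [hcw]; refine hy.trans_le ?_
      rw [degree_eq_natDegree hc.ne_zero]; exact_mod_cast Nat.le_add_right _ _
    rw [degree_add_eq_right_of_degree_lt hlt, hcw, degree_eq_natDegree hw]
    norm_cast
    omega

theorem finite_setOf_forall_degree_lt {ι : Type*} [Finite ι] [Finite K] (D : ℕ) :
    {z : ι → K[X] | ∀ i, (z i).degree < D}.Finite := by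
  have : Finite (degreeLT K D) := Finite.of_equiv _ (degreeLTEquiv K D).toEquiv.symm
  simpa only [Set.pi, Set.mem_univ, true_implies, SetLike.mem_coe, mem_degreeLT] using
    Set.Finite.pi (t := fun _ : ι => (degreeLT K D : Set K[X])) fun _ => Set.toFinite _

end Polynomial

namespace Matrix

variable {K L : Type*} [Field K] [Field L] {m n : Type*} [Fintype m] [Fintype n]

/-- Linear independence of the rows descends along a field embedding. -/
theorem mulVec_surjective_of_rank_map_eq_card (φ : K →+* L) (M : Matrix m n K)
    (h : (M.map φ).rank = Fintype.card m) : Function.Surjective M.mulVec := by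
  let := φ.toAlgebra
  have hrowsL : LinearIndependent L fun k => algebraMap K L ∘ M k := by
    refine linearIndependent_iff_card_eq_finrank_span.2 ?_
    rw [Set.finrank, ← h, rank_eq_finrank_span_row]
    rfl
  have hrank : M.rank = Fintype.card m :=
    (linearIndependent_algebraMap_comp_iff.1 hrowsL).rank_matrix
  have hrange : LinearMap.range M.mulVecLin = ⊤ := by
    apply Submodule.eq_top_of_finrank_eq
    rw [← rank, hrank, Module.finrank_fintype_fun_eq_card]
  intro v
  simpa using LinearMap.range_eq_top.1 hrange v

theorem natCard_mulVec_eq_of_surjective [Finite K] (M : Matrix m n K)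
    (hM : Function.Surjective M.mulVec) (v : m → K) :
    Nat.card {w : n → K // M *ᵥ w = v} = Nat.card K ^ (Fintype.card n - Fintype.card m) := by
  obtain ⟨w₀, hw₀⟩ := hM v
  have hfinrank : Module.finrank K (LinearMap.ker M.mulVecLin) =
      Fintype.card n - Fintype.card m := by
    have := LinearMap.finrank_range_add_finrank_ker M.mulVecLin
    rw [LinearMap.range_eq_top.2 (show Function.Surjective M.mulVecLin from hM), finrank_top,
      Module.finrank_fintype_fun_eq_card, Module.finrank_fintype_fun_eq_card] at this
    omega
  let e : {w : n → K // M *ᵥ w = v} ≃ LinearMap.ker M.mulVecLin :=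
    { toFun := fun w => ⟨w - w₀, by simp [mulVec_sub, w.2, hw₀]⟩
      invFun := fun u => ⟨u + w₀, by
        have hu : M *ᵥ u.1 = 0 := u.2
        simp [mulVec_add, hu, hw₀]⟩
      left_inv := fun w => by simp
      right_inv := fun u => by simp }
  rw [Nat.card_congr e, Module.natCard_eq_pow_finrank (K := K), hfinrank]

end Matrix

namespace AdjoinRoot

variable {K : Type*} [Field K] {π : K[X]}

theorem natCard_eq_pow_natDegree (hπ : π.Monic) :
    Nat.card (AdjoinRoot π) = Nat.card K ^ π.natDegree := by
  rw [Nat.card_congr (powerBasis' hπ).basis.equivFun.toEquiv, Nat.card_fun, Nat.card_fin,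
    powerBasis'_dim]

def degreeLTPiEquiv (hπ : π.Monic) (ι : Type*) (Q : (ι → AdjoinRoot π) → Prop) :
    {w : ι → K[X] // (∀ i, (w i).degree < π.degree) ∧ Q fun i => mk π (w i)} ≃
      {u : ι → AdjoinRoot π // Q u} where
  toFun w := ⟨fun i => mk π (w.1 i), w.2.2⟩
  invFun u := ⟨fun i => modByMonicHom hπ (u.1 i),
    fun i => by
      obtain ⟨p, hp⟩ := mk_surjective (u.1 i)
      simp only [← hp, modByMonicHom_mk]
      exact degree_modByMonic_lt _ hπ,
    by simpa [mk_leftInverse hπ _] using u.2⟩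
  left_inv w := by
    ext i : 2
    simpa [modByMonicHom_mk] using (modByMonic_eq_self_iff hπ).2 (w.2.1 i)
  right_inv u := by
    ext i : 2
    exact mk_leftInverse hπ _

end AdjoinRoot

section Lifting

variable {K : Type} [Field K] {n R : ℕ} (f : Fin R → MvPolynomial (Fin n) K)

def jacobianMatrix {A : Type*} [CommSemiring A] [Algebra K A] (x : Fin n → A) :
    Matrix (Fin R) (Fin n) A :=
  Matrix.of fun k i => aeval x (pderiv i (f k))

theorem jacobianMatrix_map {A B : Type*} [CommSemiring A] [Algebra K A] [CommSemiring B]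
    [Algebra K B] (φ : A →ₐ[K] B) (x : Fin n → A) :
    (jacobianMatrix f x).map φ = jacobianMatrix f fun i => φ (x i) := by
  ext k i
  exact MvPolynomial.comp_aeval_apply (f := x) φ _

/-- The `w` for which `y + c w` solves `f ≡ 0 (mod cπ)`, when `y` is a solution modulo `c` with
`f(y) = c U`. -/
def linearLiftSet (π : K[X]) (y : Fin n → K[X]) (U : Fin R → K[X]) : Set (Fin n → K[X]) :=
  {w | (∀ i, (w i).degree < π.degree) ∧ ∀ k, π ∣ U k + (jacobianMatrix f y *ᵥ w) k}

variable {f}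

theorem jacobianMatrix_mulVec_surjective
    (hJ : ∀ x : Fin n → AlgebraicClosure K, x ≠ 0 → (∀ k, aeval x (f k) = 0) →
      (jacobianMatrix f x).rank = R)
    {π : K[X]} [Fact (Irreducible π)] [Module.Finite K (AdjoinRoot π)] {y : Fin n → K[X]}
    (hy : ¬ ∀ i, π ∣ y i) (hfy : ∀ k, π ∣ aeval y (f k)) :
    Function.Surjective (jacobianMatrix f fun i => AdjoinRoot.mk π (y i)).mulVec := by
  let ι : AdjoinRoot π →ₐ[K] AlgebraicClosure K := IsAlgClosed.lift
  refine Matrix.mulVec_surjective_of_rank_map_eq_card ι.toRingHom _ ?_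
  rw [AlgHom.toRingHom_eq_coe, RingHom.coe_coe, jacobianMatrix_map, Fintype.card_fin]
  refine hJ _ (fun h0 => hy fun i => ?_) fun k => ?_
  · rw [← AdjoinRoot.mk_eq_zero, ← map_eq_zero_iff ι ι.injective]
    exact congrFun h0 i
  · rw [← AdjoinRoot.coe_mkₐ, ← MvPolynomial.comp_aeval_apply, ← MvPolynomial.comp_aeval_apply,
      AdjoinRoot.coe_mkₐ, AdjoinRoot.mk_eq_zero.2 (hfy k), map_zero]

theorem natCard_linearLiftSet [Fintype K]
    (hJ : ∀ x : Fin n → AlgebraicClosure K, x ≠ 0 → (∀ k, aeval x (f k) = 0) →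
      (jacobianMatrix f x).rank = R)
    {π : K[X]} (hπ : π.Monic) (hirr : Irreducible π) {y : Fin n → K[X]}
    (hy : ¬ ∀ i, π ∣ y i) (hfy : ∀ k, π ∣ aeval y (f k)) (U : Fin R → K[X]) :
    Nat.card (linearLiftSet f π y U) = Fintype.card K ^ ((n - R) * π.natDegree) := by
  have := Fact.mk hirr
  have := Module.Finite.of_basis (AdjoinRoot.powerBasis' hπ).basis
  have := Module.finite_of_finite K (M := AdjoinRoot π)
  set J := jacobianMatrix f fun i => AdjoinRoot.mk π (y i)
  have hJ_mk : (jacobianMatrix f y).map (AdjoinRoot.mk π) = J :=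
    jacobianMatrix_map f (AdjoinRoot.mkₐ π) y
  have hmem : ∀ w, w ∈ linearLiftSet f π y U ↔ (∀ i, (w i).degree < π.degree) ∧
      J *ᵥ (fun i => AdjoinRoot.mk π (w i)) = -fun k => AdjoinRoot.mk π (U k) := by
    intro w
    refine and_congr_right fun _ => ?_
    rw [funext_iff]
    refine forall_congr' fun k => ?_
    rw [← AdjoinRoot.mk_eq_zero, map_add, RingHom.map_mulVec, hJ_mk, Pi.neg_apply,
      eq_neg_iff_add_eq_zero, add_comm]
    rfl
  rw [Nat.card_congr ((Equiv.subtypeEquivRight hmem).trans (AdjoinRoot.degreeLTPiEquiv hπ _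
      fun u => J *ᵥ u = -fun k => AdjoinRoot.mk π (U k))),
    Matrix.natCard_mulVec_eq_of_surjective J (jacobianMatrix_mulVec_surjective hJ hy hfy),
    AdjoinRoot.natCard_eq_pow_natDegree hπ, Nat.card_eq_fintype_card, Fintype.card_fin,
    Fintype.card_fin, ← pow_mul, mul_comm]

theorem mul_dvd_aeval_add_smul_iff_jacobianMatrix {c π : K[X]} (hc : c ≠ 0) (hπc : π ∣ c)
    {y : Fin n → K[X]} {k : Fin R} (hy : c ∣ aeval y (f k)) (w : Fin n → K[X]) :
    c * π ∣ aeval (y + c • w) (f k) ↔ π ∣ aeval y (f k) / c + (jacobianMatrix f y *ᵥ w) k :=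
  MvPolynomial.mul_dvd_aeval_add_smul_iff hc hπc (EuclideanDomain.mul_div_cancel' hc hy).symm w

variable (f) in
def SolutionsMod (g : K[X]) (D : ℕ) (P : (Fin n → K[X]) → Prop) : Type :=
  {z : Fin n → K[X] // (∀ i, (z i).degree < (D : WithBot ℕ)) ∧ P z ∧ ∀ k, g ∣ aeval z (f k)}

variable {c π : K[X]} {P : (Fin n → K[X]) → Prop}

def liftMap (hc : c.Monic) (hπ : π.Monic) (hπc : π ∣ c) (hP : ∀ y w, P (y + c • w) ↔ P y) :
    (Σ y : SolutionsMod f c c.natDegree P, linearLiftSet f π y.1 fun k => aeval y.1 (f k) / c) →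
      SolutionsMod f (c * π) (c.natDegree + π.natDegree) P := fun ⟨y, w⟩ =>
  ⟨y.1 + c • w.1,
    fun i => (degree_add_mul_lt_iff hc (degree_eq_natDegree hc.ne_zero ▸ y.2.1 i) _).2
      (degree_eq_natDegree hπ.ne_zero ▸ w.2.1 i),
    (hP _ _).2 y.2.2.1,
    fun k => (mul_dvd_aeval_add_smul_iff_jacobianMatrix hc.ne_zero hπc (y.2.2.2 k) w.1).2 (w.2.2 k)⟩

/-- Division with remainder by `c` inverts `liftMap`. -/
theorem liftMap_bijective (hc : c.Monic) (hπ : π.Monic) (hπc : π ∣ c)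
    (hP : ∀ y w, P (y + c • w) ↔ P y) : Function.Bijective (liftMap (f := f) hc hπ hπc hP) := by
  have hcdeg : c.degree = c.natDegree := degree_eq_natDegree hc.ne_zero
  have hdivmod : ∀ (y : SolutionsMod f c c.natDegree P) (w : Fin n → K[X]) i,
      (y.1 i + c * w i) /ₘ c = w i ∧ (y.1 i + c * w i) %ₘ c = y.1 i := fun y w i =>
    div_modByMonic_unique _ _ hc ⟨rfl, (y.2.1 i).trans_eq hcdeg.symm⟩
  refine ⟨fun ⟨y, w⟩ ⟨y', w'⟩ h => ?_, fun ⟨z, hzdeg, hzP, hzf⟩ => ?_⟩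
  · have h' (i : Fin n) : y.1 i + c * w.1 i = y'.1 i + c * w'.1 i :=
      congrFun (congrArg Subtype.val h) i
    obtain rfl : y = y' := Subtype.ext <| funext fun i => by
      rw [← (hdivmod y w i).2, ← (hdivmod y' w' i).2, h']
    exact Sigma.subtype_ext rfl <| funext fun i => by
      rw [← (hdivmod y w i).1, ← (hdivmod y w' i).1, h']
  · set y : Fin n → K[X] := fun i => z i %ₘ c
    set w : Fin n → K[X] := fun i => z i /ₘ c
    have hz : y + c • w = z := funext fun i => modByMonic_add_div (z i) c
    rw [← hz] at hzP hzf
    have hyc : ∀ k, c ∣ aeval y (f k) := fun k =>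
      (MvPolynomial.dvd_aeval_add_smul_iff (f k) c y w).1 (dvd_of_mul_right_dvd (hzf k))
    refine ⟨⟨⟨y, fun i => hcdeg ▸ degree_modByMonic_lt _ hc, (hP y w).1 hzP, hyc⟩,
      ⟨w, fun i => ?_, fun k =>
        (mul_dvd_aeval_add_smul_iff_jacobianMatrix hc.ne_zero hπc (hyc k) w).1 (hzf k)⟩⟩,
      Subtype.ext hz⟩
    rw [degree_eq_natDegree hπ.ne_zero, ← degree_add_mul_lt_iff hc (degree_modByMonic_lt _ hc),
      modByMonic_add_div]
    exact hzdeg i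

theorem nsolP_mul_eq_mul [Finite K] (hc : c.Monic) (hπ : π.Monic) (hπc : π ∣ c)
    (hP : ∀ y w, P (y + c • w) ↔ P y) {N : ℕ}
    (hN : ∀ y, P y → (∀ k, c ∣ aeval y (f k)) →
      Nat.card (linearLiftSet f π y fun k => aeval y (f k) / c) = N) :
    NsolP K f (c * π) (c.natDegree + π.natDegree) P = N * NsolP K f c c.natDegree P := by
  have : Finite (SolutionsMod f c c.natDegree P) :=
    ((finite_setOf_forall_degree_lt _).subset fun y hy => hy.1).to_subtype
  have : Fintype (SolutionsMod f c c.natDegree P) := Fintype.ofFinite _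
  have (y : SolutionsMod f c c.natDegree P) :
      Finite (linearLiftSet f π y.1 fun k => aeval y.1 (f k) / c) :=
    ((finite_setOf_forall_degree_lt π.natDegree).subset fun w hw i =>
      degree_eq_natDegree hπ.ne_zero ▸ hw.1 i).to_subtype
  rw [NsolP, NsolP, ← SolutionsMod, ← SolutionsMod,
    ← Nat.card_congr (Equiv.ofBijective _ (liftMap_bijective hc hπ hπc hP)), Nat.card_sigma,
    Finset.sum_congr rfl fun y _ => hN y.1 y.2.2.1 y.2.2.2, Finset.sum_const, smul_eq_mul,
    Finset.card_univ, ← Nat.card_eq_fintype_card, mul_comm]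

end Lifting

theorem statement8_general (Fq : Type) [Field Fq] [Fintype Fq] (d n R : ℕ)
    (f : Fin R → MvPolynomial (Fin n) Fq) (hsm : SmoothCI Fq d f)
    (π : Polynomial Fq) (hmon : π.Monic) (hirr : Irreducible π)
    (μ : ℕ) (hμ : 1 ≤ μ)
    (b : Fin n → Polynomial Fq) (hb : ¬ ∀ i, π ∣ b i)
    (e : ℕ) (hμe : μ ≤ e - 1) :
    NsolP Fq f (π ^ e) (e * π.natDegree) (fun z => ∀ i, π ^ μ ∣ (z i - b i))
      = Fintype.card Fq ^ ((n - R) * π.natDegree) *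
        NsolP Fq f (π ^ (e - 1)) ((e - 1) * π.natDegree)
          (fun z => ∀ i, π ^ μ ∣ (z i - b i)) := by
  obtain ⟨i₀, hbi₀⟩ := not_forall.1 hb
  have he : e - 1 + 1 = e := by omega
  have hπc : π ∣ π ^ (e - 1) := dvd_pow_self π (by omega)
  have hπμ : π ^ μ ∣ π ^ (e - 1) := pow_dvd_pow π hμe
  have hpow : π ^ e = π ^ (e - 1) * π := by rw [← pow_succ, he]
  have hdeg : e * π.natDegree = (π ^ (e - 1)).natDegree + π.natDegree := by
    rw [hmon.natDegree_pow, ← add_one_mul, he]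
  rw [hpow, hdeg, ← hmon.natDegree_pow (e - 1)]
  refine nsolP_mul_eq_mul (hmon.pow _) hmon hπc (fun y w => forall_congr' fun i => ?_)
    fun y hy hfy => natCard_linearLiftSet hsm.2.2 hmon hirr (fun hy0 => hbi₀ ?_)
      (fun k => hπc.trans (hfy k)) _
  · rw [Pi.add_apply, Pi.smul_apply, smul_eq_mul, add_sub_right_comm]
    exact dvd_add_left (dvd_mul_of_dvd_left hπμ _)
  · exact (dvd_sub_right (hy0 i₀)).1 ((dvd_pow_self π (by omega)).trans (hy i₀))

/-- eq. (3.?) `N†(π^e) = |π|^{n-R} N†(π^{e-1})`. -/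
theorem statement8 (Fq : Type) [Field Fq] [Fintype Fq] (p d n R : ℕ)
    [Fact p.Prime] [CharP Fq p] (hd : 2 ≤ d) (hdp : d < p) (hRn : R ≤ n)
    (f : Fin R → MvPolynomial (Fin n) Fq) (hsm : SmoothCI Fq d f)
    (π : Polynomial Fq) (hmon : π.Monic) (hirr : Irreducible π)
    (μ : ℕ) (hμ : 1 ≤ μ)
    (b : Fin n → Polynomial Fq) (hb : ¬ ∀ i, π ∣ b i)
    (hfb : ∀ k, π ^ μ ∣ MvPolynomial.aeval b (f k))
    (e : ℕ) (he : 2 ≤ e) (hμe : μ ≤ e - 1) :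
    NsolP Fq f (π ^ e) (e * π.natDegree) (fun z => ∀ i, π ^ μ ∣ (z i - b i))
      = Fintype.card Fq ^ ((n - R) * π.natDegree) *
        NsolP Fq f (π ^ (e - 1)) ((e - 1) * π.natDegree)
          (fun z => ∀ i, π ^ μ ∣ (z i - b i)) :=
  statement8_general Fq d n R f hsm π hmon hirr μ hμ b hb e hμe
end
end
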